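/- Let (α, β) be a pair of real numbers for which there exist a constant C > 0 and a constant d ≥ 2 such that 1/(C b^d) ≤ |p + αq + βr| for all relatively prime integers p, q, r, where b = max(|p|, |q|, |r|). Then for every s > 0 and every positive integer N, Z_N(α, β, s) ≤ 2^N · C^s · 2^{N s d}. -/

import Mathlib

open Matrix Filter

noncomputable section

/-- The matrix `A₀` with rows (0,0,1), (1,0,−1), (0,1,0). -/
def A0 : Matrix (Fin 3) (Fin 3) ℝ := !![0,0,1; 1,0,-1; 0,1,0]

/-- The matrix `A₁` with rows (1,0,0), (0,1,0), (−1,0,1). -/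
def A1 : Matrix (Fin 3) (Fin 3) ℝ := !![1,0,0; 0,1,0; -1,0,1]

/-- `Amat 0 = A₀`, `Amat 1 = A₁`. -/
def Amat : Fin 2 → Matrix (Fin 3) (Fin 3) ℝ := ![A0, A1]

/-- The matrix `M` with rows (0,0,1), (0,0,α), (0,0,β). -/
def Mmat (α β : ℝ) : Matrix (Fin 3) (Fin 3) ℝ := !![0,0,1; 0,0,α; 0,0,β]

/-- Hilbert–Schmidt (Hadamard) product `A*B = Tr(A Bᵀ)`. -/
def HS (A B : Matrix (Fin 3) (Fin 3) ℝ) : ℝ := (A * Bᵀ).trace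

/-- `A^I = A_{σ₁} A_{σ₂} ⋯ A_{σ_N}` for a state `I = (σ₁,…,σ_N) ∈ {0,1}^N`. -/
def AI {N : ℕ} (I : Fin N → Fin 2) : Matrix (Fin 3) (Fin 3) ℝ :=
  (List.ofFn fun i => Amat (I i)).prod

/-- The partition function `Z_N(α, β, s) = Σ_{I ∈ 𝒮_N} 1/|M*A^I|^s`. -/
def Z (N : ℕ) (α β s : ℝ) : ℝ :=
  ∑ I : Fin N → Fin 2, 1 / |HS (Mmat α β) (AI I)| ^ s

/-! Every `A^I` is an integer matrix of determinant one, so the last column `(p, q, r)` of `A^I`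
is primitive (a common divisor divides the cofactor expansion of the determinant along that
column), and `M*A^I = p + αq + βr`. The rows of `|A₀|` and `|A₁|` sum to at most two, so the
entries of `A^I` are bounded by `2^N`. The Diophantine hypothesis then bounds each of the `2^N`
terms of `Z_N` by `C^s 2^{Nsd}`. -/

theorem Matrix.abs_list_prod_apply_le {n R : Type*} [Fintype n] [DecidableEq n] [CommRing R]
    [LinearOrder R] [IsStrictOrderedRing R] {c : R} (l : List (Matrix n n R))
    (hl : ∀ A ∈ l, ∀ i, ∑ k, |A i k| ≤ c) (i j : n) : |l.prod i j| ≤ c ^ l.length := by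
  induction l generalizing i j with
  | nil => by_cases hij : i = j <;> simp [hij]
  | cons A t ih =>
    have hA := hl A List.mem_cons_self i
    have ht := ih (fun B hB => hl B (List.mem_cons_of_mem _ hB))
    calc |(A :: t).prod i j| = |∑ k, A i k * t.prod k j| := by
          rw [List.prod_cons, Matrix.mul_apply]
      _ ≤ ∑ k, |A i k| * |t.prod k j| := by
          simpa only [abs_mul] using
            Finset.abs_sum_le_sum_abs (fun k => A i k * t.prod k j) Finset.univ
      _ ≤ ∑ k, |A i k| * c ^ t.length := by
          gcongr with k; exact ht k j
      _ = (∑ k, |A i k|) * c ^ t.length := by rw [Finset.sum_mul]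
      _ ≤ c * c ^ t.length := by
          gcongr; exact (abs_nonneg _).trans (ht i j)
      _ = c ^ (A :: t).length := by rw [List.length_cons, pow_succ']

theorem Matrix.dvd_det_of_forall_dvd_col {n R : Type*} [Fintype n] [DecidableEq n] [CommRing R]
    {B : Matrix n n R} {a : R} (j : n) (h : ∀ i, a ∣ B i j) : a ∣ B.det := by
  have hdet : (B.adjugate * B) j j = B.det := by simp [Matrix.adjugate_mul]
  rw [← hdet, Matrix.mul_apply]
  exact Finset.dvd_sum fun i _ => (h i).mul_left _

theorem Int.gcd_gcd_eq_one_of_dvd_one {p q r : ℤ}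
    (h : ∀ a : ℤ, a ∣ p → a ∣ q → a ∣ r → a ∣ 1) : Int.gcd p (Int.gcd q r) = 1 := by
  have hg := h (Int.gcd p (Int.gcd q r)) (Int.gcd_dvd_left _ _)
    ((Int.gcd_dvd_right _ _).trans (Int.gcd_dvd_left _ _))
    ((Int.gcd_dvd_right _ _).trans (Int.gcd_dvd_right _ _))
  exact Nat.dvd_one.mp (Int.natCast_dvd_natCast.mp hg)

theorem one_div_abs_rpow_le {x b C d s : ℝ} (hC : 0 < C) (hb : 0 < b) (hs : 0 ≤ s)
    (hx : 1 / (C * b ^ d) ≤ |x|) : 1 / |x| ^ s ≤ C ^ s * b ^ (d * s) := by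
  have hCb : 0 < C * b ^ d := mul_pos hC (Real.rpow_pos_of_pos hb d)
  calc 1 / |x| ^ s ≤ 1 / (1 / (C * b ^ d)) ^ s := by
        gcongr
    _ = C ^ s * b ^ (d * s) := by
        rw [one_div (C * _), Real.inv_rpow hCb.le, one_div, inv_inv,
          Real.mul_rpow hC.le (Real.rpow_pos_of_pos hb d).le, ← Real.rpow_mul hb.le]

def DiophantineLowerBound (α β C d : ℝ) : Prop :=
  ∀ p q r : ℤ, Int.gcd p (Int.gcd q r) = 1 →
    1 / (C * (max |(p : ℝ)| (max |(q : ℝ)| |(r : ℝ)|)) ^ d) ≤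
      |(p : ℝ) + α * (q : ℝ) + β * (r : ℝ)|

def AmatInt : Fin 2 → Matrix (Fin 3) (Fin 3) ℤ :=
  ![!![0,0,1; 1,0,-1; 0,1,0], !![1,0,0; 0,1,0; -1,0,1]]

def AIInt {N : ℕ} (I : Fin N → Fin 2) : Matrix (Fin 3) (Fin 3) ℤ :=
  (List.ofFn fun i => AmatInt (I i)).prod

theorem AmatInt_map_cast (σ : Fin 2) : (AmatInt σ).map ((↑) : ℤ → ℝ) = Amat σ := by
  ext i j
  fin_cases σ <;> fin_cases i <;> fin_cases j <;> simp [AmatInt, Amat, A0, A1]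

theorem AI_eq_map_AIInt {N : ℕ} (I : Fin N → Fin 2) :
    AI I = (AIInt I).map ((↑) : ℤ → ℝ) := by
  change _ = (Int.castRingHom ℝ).mapMatrix (AIInt I)
  simp only [AIInt, map_list_prod, List.map_ofFn, AI]
  exact congrArg _ (congrArg _ (funext fun i => (AmatInt_map_cast (I i)).symm))

theorem det_AIInt {N : ℕ} (I : Fin N → Fin 2) : (AIInt I).det = 1 := by
  have hσ (σ : Fin 2) : (AmatInt σ).det = 1 := by
    fin_cases σ <;> simp [AmatInt, Matrix.det_fin_three]
  change (Matrix.detMonoidHom : Matrix (Fin 3) (Fin 3) ℤ →* ℤ) (AIInt I) = 1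
  simp [AIInt, map_list_prod, List.map_ofFn, Function.comp_def, hσ]

theorem abs_AIInt_apply_le {N : ℕ} (I : Fin N → Fin 2) (i j : Fin 3) :
    |AIInt I i j| ≤ 2 ^ N := by
  have hrow (σ : Fin 2) (i : Fin 3) : ∑ k, |AmatInt σ i k| ≤ 2 := by
    fin_cases σ <;> fin_cases i <;> simp [AmatInt, Fin.sum_univ_three]
  have hl : ∀ A ∈ List.ofFn (fun i => AmatInt (I i)), ∀ i, ∑ k, |A i k| ≤ 2 := by
    simp only [List.mem_ofFn, forall_exists_index, forall_apply_eq_imp_iff]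
    exact fun k => hrow (I k)
  simpa [AIInt] using Matrix.abs_list_prod_apply_le _ hl i j

theorem gcd_AIInt_col_two {N : ℕ} (I : Fin N → Fin 2) :
    Int.gcd (AIInt I 0 2) (Int.gcd (AIInt I 1 2) (AIInt I 2 2)) = 1 :=
  Int.gcd_gcd_eq_one_of_dvd_one fun a hp hq hr => det_AIInt I ▸
    Matrix.dvd_det_of_forall_dvd_col 2 fun i => by fin_cases i <;> assumption

theorem HS_Mmat (α β : ℝ) (A : Matrix (Fin 3) (Fin 3) ℝ) :
    HS (Mmat α β) A = A 0 2 + α * A 1 2 + β * A 2 2 := by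
  simp [HS, Mmat, Matrix.trace, Matrix.diag, Matrix.mul_apply, Fin.sum_univ_three]

theorem one_div_abs_HS_rpow_le {α β C d s : ℝ} (hC : 0 < C) (hd : 0 ≤ d) (hs : 0 ≤ s)
    (h : DiophantineLowerBound α β C d) {N : ℕ} (I : Fin N → Fin 2) :
    1 / |HS (Mmat α β) (AI I)| ^ s ≤ C ^ s * (2 : ℝ) ^ ((N : ℝ) * s * d) := by
  set b : ℝ := max |(AIInt I 0 2 : ℝ)| (max |(AIInt I 1 2 : ℝ)| |(AIInt I 2 2 : ℝ)|)
  have hb_pos : 0 < b := by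
    have hgcd := gcd_AIInt_col_two I
    by_contra! hb
    have h0 (i : Fin 3) (hi : |(AIInt I i 2 : ℝ)| ≤ b) : AIInt I i 2 = 0 := by
      exact_mod_cast abs_nonpos_iff.mp (hi.trans hb)
    rw [h0 0 (le_max_left ..), h0 1 ((le_max_left ..).trans (le_max_right ..)),
      h0 2 ((le_max_right ..).trans (le_max_right ..))] at hgcd
    simp at hgcd
  have hb_le : b ≤ 2 ^ N := by
    have (i : Fin 3) : |(AIInt I i 2 : ℝ)| ≤ 2 ^ N := by
      exact_mod_cast abs_AIInt_apply_le I i 2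
    exact max_le (this 0) (max_le (this 1) (this 2))
  have hx := h _ _ _ (gcd_AIInt_col_two I)
  rw [← Int.cast_abs] at hx
  calc 1 / |HS (Mmat α β) (AI I)| ^ s ≤ C ^ s * b ^ (d * s) := by
        refine one_div_abs_rpow_le hC hb_pos hs ?_
        simpa [HS_Mmat, AI_eq_map_AIInt] using hx
    _ ≤ C ^ s * ((2 : ℝ) ^ N) ^ (d * s) := by gcongr
    _ = C ^ s * (2 : ℝ) ^ ((N : ℝ) * s * d) := by
        rw [← Real.rpow_natCast, ← Real.rpow_mul zero_le_two]; ring_nf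

/-- If `1/(C bᵈ) ≤ |p + αq + βr|` for all relatively prime integers `p, q, r`
(with `b = max(|p|,|q|,|r|)`), then for every `s > 0` and every positive integer `N`,
`Z_N(α, β, s) ≤ 2^N · C^s · 2^{N s d}`. -/
theorem Z_le_bound (α β : ℝ) (C d : ℝ) (hC : 0 < C) (hd : 2 ≤ d)
    (h : ∀ p q r : ℤ, Int.gcd p (Int.gcd q r) = 1 →
      1 / (C * (max |(p : ℝ)| (max |(q : ℝ)| |(r : ℝ)|)) ^ d) ≤
        |(p : ℝ) + α * (q : ℝ) + β * (r : ℝ)|) :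
    ∀ s : ℝ, 0 < s → ∀ N : ℕ, 0 < N →
      Z N α β s ≤ 2 ^ N * C ^ s * (2 : ℝ) ^ ((N : ℝ) * s * d) := by
  intro s hs N _
  calc Z N α β s ≤ ∑ _I : Fin N → Fin 2, C ^ s * (2 : ℝ) ^ ((N : ℝ) * s * d) :=
        Finset.sum_le_sum fun I _ => one_div_abs_HS_rpow_le hC (by linarith) hs.le h I
    _ = 2 ^ N * C ^ s * (2 : ℝ) ^ ((N : ℝ) * s * d) := by simp [mul_assoc]

end
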